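/- Fix an integer ℓ ≥ 0. Assume the γ-strong C-order and the β_ℓ-ℓ-weak P-order assumptions hold for some γ ≥ 0 and β_ℓ ≥ 0. Then every C-side ℓ-Greedy-Local matching M' satisfies w(M) ≤ max{1+γ, β_ℓ+γ}·w(M') for every matching M of the instance. -/

import Mathlib

/-- A matching of a bipartite instance with edge set `E ⊆ P × C`. -/
def IsBipMatching {s q : ℕ} (E M : Finset (Fin s × Fin q)) : Prop :=
  M ⊆ E ∧ ∀ e₁ ∈ M, ∀ e₂ ∈ M, e₁ ≠ e₂ → e₁.1 ≠ e₂.1 ∧ e₁.2 ≠ e₂.2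

/-- The γ-strong C-order assumption. -/
def StrongCOrder {s q : ℕ} (E : Finset (Fin s × Fin q)) (w : Fin s × Fin q → ℝ)
    (γ : ℝ) : Prop :=
  ∀ i j : Fin q, i < j → ∀ p : Fin s, (p, i) ∈ E → (p, j) ∈ E → w (p, j) ≤ γ * w (p, i)

/-- The βℓ-ℓ-weak P-order assumption: the bound is only required when at least ℓ other
neighbors of `c` lie strictly between `p_i` and `p_j` in P-order. -/
def WeakPOrder {s q : ℕ} (E : Finset (Fin s × Fin q)) (w : Fin s × Fin q → ℝ)
    (ℓ : ℕ) (βℓ : ℝ) : Prop :=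
  ∀ i j : Fin s, i < j → ∀ c : Fin q, (i, c) ∈ E → (j, c) ∈ E →
    ℓ ≤ (Finset.univ.filter (fun x : Fin s => i < x ∧ x < j ∧ (x, c) ∈ E)).card →
    w (j, c) ≤ βℓ * w (i, c)

/-- `availSetC E M' j` = the set `B_j` of P-vertices `p` with `(p, c_j) ∈ E` that are not
blocked by an edge `(p, c_i) ∈ M'` with `i < j`. -/
def availSetC {s q : ℕ} (E M' : Finset (Fin s × Fin q)) (j : Fin q) : Finset (Fin s) :=
  Finset.univ.filter (fun p : Fin s => (p, j) ∈ E ∧ ∀ i : Fin q, i < j → (p, i) ∉ M')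

/-- `firstAvailC E M' ℓ j` = the set `F'_j` of the min(ℓ+1, |B_j|) first elements of `B_j`
in P-order (those with at most ℓ smaller elements of `B_j`). -/
def firstAvailC {s q : ℕ} (E M' : Finset (Fin s × Fin q)) (ℓ : ℕ) (j : Fin q) :
    Finset (Fin s) :=
  (availSetC E M' j).filter
    (fun p : Fin s => ((availSetC E M' j).filter (fun p' : Fin s => p' < p)).card ≤ ℓ)

/-- A C-side ℓ-Greedy-Local matching: a matching `M'` such that whenever `B_j ≠ ∅`, `c_j` is
matched to a maximum-weight edge among `F'_j` (the ℓ+1 first still-available P-neighbors),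
and whenever `B_j = ∅`, `c_j` is unmatched. -/
def CGreedyLocalL {s q : ℕ} (E : Finset (Fin s × Fin q)) (w : Fin s × Fin q → ℝ) (ℓ : ℕ)
    (M' : Finset (Fin s × Fin q)) : Prop :=
  IsBipMatching E M' ∧ ∀ j : Fin q,
    ((availSetC E M' j).Nonempty →
      ∃ p ∈ firstAvailC E M' ℓ j, (p, j) ∈ M' ∧
        ∀ p' ∈ firstAvailC E M' ℓ j, w (p', j) ≤ w (p, j)) ∧
    (availSetC E M' j = ∅ → ∀ p : Fin s, (p, j) ∉ M')

/-! Split `M` according to whether the P-endpoint `p` of an edge `(p, c_j)` was still available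
when the greedy algorithm processed `c_j`. A blocked edge is charged, by the γ-strong C-order
assumption, to the earlier greedy edge at `p`. An available edge is charged to the greedy edge at
`c_j`: that edge weighs at least as much if `p` is among the first ℓ + 1 available neighbors, and
otherwise at least `1/βℓ` times as much, because ℓ available neighbors lie strictly between the
first available one and `p`. Both charges are injective since `M` is a matching. -/

open Finset

theorem sum_le_mul_sum_of_charge {ι κ : Type*} {t t' : Finset ι} {u v : ι → ℝ} {c : ℝ}
    (k : ι → κ) (hk : Set.InjOn k t) (hc : 0 ≤ c) (hv : ∀ j ∈ t', 0 ≤ v j)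
    (h : ∀ i ∈ t, ∃ j ∈ t', k j = k i ∧ u i ≤ c * v j) :
    ∑ i ∈ t, u i ≤ c * ∑ j ∈ t', v j := by
  classical
  choose! f hft hkf hle using h
  have hf : Set.InjOn f t := fun a ha b hb hab => hk ha hb (by rw [← hkf a ha, ← hkf b hb, hab])
  calc ∑ i ∈ t, u i ≤ ∑ i ∈ t, c * v (f i) := sum_le_sum hle
    _ = c * ∑ j ∈ t.image f, v j := by rw [sum_image hf, mul_sum]
    _ ≤ c * ∑ j ∈ t', v j := mul_le_mul_of_nonneg_left
      (sum_le_sum_of_subset_of_nonneg (image_subset_iff.mpr hft) fun j hj _ => hv j hj) hc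

theorem card_filter_lt_le_card_filter_between_add_one {α : Type*} [LinearOrder α]
    (S : Finset α) (hS : S.Nonempty) (b : α) :
    #{x ∈ S | x < b} ≤ #{x ∈ S | S.min' hS < x ∧ x < b} + 1 := by
  calc #{x ∈ S | x < b} ≤ #(insert (S.min' hS) {x ∈ S | S.min' hS < x ∧ x < b}) := by
        refine card_le_card fun x hx => ?_
        rw [mem_filter] at hx
        rcases (S.min'_le x hx.1).eq_or_lt with hmin | hmin
        · exact mem_insert.mpr (Or.inl hmin.symm)
        · exact mem_insert_of_mem (mem_filter.mpr ⟨hx.1, hmin, hx.2⟩)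
    _ ≤ _ := card_insert_le _ _

section BipartiteInstance

variable {s q : ℕ} {E M M' : Finset (Fin s × Fin q)} {w : Fin s × Fin q → ℝ} {ℓ : ℕ}
  {p : Fin s} {j : Fin q}

theorem IsBipMatching.injOn_fst (hM : IsBipMatching E M) :
    Set.InjOn Prod.fst (M : Set (Fin s × Fin q)) := fun a ha b hb hab =>
  by_contra fun hne => (hM.2 a ha b hb hne).1 hab

theorem IsBipMatching.injOn_snd (hM : IsBipMatching E M) :
    Set.InjOn Prod.snd (M : Set (Fin s × Fin q)) := fun a ha b hb hab =>
  by_contra fun hne => (hM.2 a ha b hb hne).2 hab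

@[simp]
theorem mem_availSetC :
    p ∈ availSetC E M' j ↔ (p, j) ∈ E ∧ ∀ i : Fin q, i < j → (p, i) ∉ M' := by
  simp [availSetC]

theorem min'_mem_firstAvailC (hB : (availSetC E M' j).Nonempty) :
    (availSetC E M' j).min' hB ∈ firstAvailC E M' ℓ j := by
  refine mem_filter.mpr ⟨min'_mem _ hB, ?_⟩
  rw [filter_eq_empty_iff.mpr fun x hx => not_lt.mpr (min'_le _ x hx)]
  exact Nat.zero_le ℓ

theorem WeakPOrder.exists_le_mul_of_not_mem_firstAvailC {βℓ : ℝ} (hordP : WeakPOrder E w ℓ βℓ)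
    (hB : p ∈ availSetC E M' j) (hF : p ∉ firstAvailC E M' ℓ j) :
    ∃ p₀ ∈ firstAvailC E M' ℓ j, w (p, j) ≤ βℓ * w (p₀, j) := by
  set B := availSetC E M' j
  have hne : B.Nonempty := ⟨p, hB⟩
  generalize hp₀ : B.min' hne = p₀
  have hp₀F : p₀ ∈ firstAvailC E M' ℓ j := hp₀ ▸ min'_mem_firstAvailC hne
  have hp₀p : p₀ < p := (hp₀ ▸ B.min'_le p hB).lt_of_ne fun h => hF (h ▸ hp₀F)
  have hmany : ℓ + 1 ≤ #{x ∈ B | x < p} := by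
    by_contra! h
    exact hF (mem_filter.mpr ⟨hB, Nat.le_of_lt_succ h⟩)
  have hbetween : #{x ∈ B | p₀ < x ∧ x < p} ≤ #{x | p₀ < x ∧ x < p ∧ (x, j) ∈ E} :=
    card_le_card fun x hx => by
      simp only [mem_filter, mem_univ, true_and, B, mem_availSetC] at hx ⊢
      exact ⟨hx.2.1, hx.2.2, hx.1.1⟩
  refine ⟨p₀, hp₀F, hordP p₀ p hp₀p j (mem_availSetC.mp (hp₀ ▸ B.min'_mem hne)).1
    (mem_availSetC.mp hB).1 ?_⟩
  have := hp₀ ▸ card_filter_lt_le_card_filter_between_add_one B hne p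
  omega

theorem CGreedyLocalL.exists_le_max_mul_of_mem_availSetC {βℓ : ℝ} (hM' : CGreedyLocalL E w ℓ M')
    (hw : ∀ e ∈ E, 0 ≤ w e) (hβ : 0 ≤ βℓ) (hordP : WeakPOrder E w ℓ βℓ)
    (hp : p ∈ availSetC E M' j) :
    ∃ p' : Fin s, (p', j) ∈ M' ∧ w (p, j) ≤ max 1 βℓ * w (p', j) := by
  obtain ⟨p', hp'F, hp'M, hmax⟩ := (hM'.2 j).1 ⟨p, hp⟩
  have hw' : 0 ≤ w (p', j) := hw _ (hM'.1.1 hp'M)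
  refine ⟨p', hp'M, ?_⟩
  by_cases hF : p ∈ firstAvailC E M' ℓ j
  · calc w (p, j) ≤ w (p', j) := hmax p hF
      _ ≤ max 1 βℓ * w (p', j) := le_mul_of_one_le_left hw' (le_max_left _ _)
  · obtain ⟨p₀, hp₀F, hle⟩ := hordP.exists_le_mul_of_not_mem_firstAvailC hp hF
    calc w (p, j) ≤ βℓ * w (p₀, j) := hle
      _ ≤ βℓ * w (p', j) := mul_le_mul_of_nonneg_left (hmax p₀ hp₀F) hβ
      _ ≤ max 1 βℓ * w (p', j) := mul_le_mul_of_nonneg_right (le_max_right _ _) hw'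

theorem StrongCOrder.exists_le_mul_of_not_mem_availSetC {γ : ℝ} (hordC : StrongCOrder E w γ)
    (hM'E : M' ⊆ E) (he : (p, j) ∈ E) (hp : p ∉ availSetC E M' j) :
    ∃ i : Fin q, (p, i) ∈ M' ∧ w (p, j) ≤ γ * w (p, i) := by
  simp only [mem_availSetC, he, true_and, not_forall, not_not] at hp
  obtain ⟨i, hij, hi⟩ := hp
  exact ⟨i, hi, hordC i j hij p (hM'E hi) he⟩

end BipartiteInstance

/-- Under the γ-strong C-order and βℓ-ℓ-weak P-order assumptions,
the C-side ℓ-Greedy-Local algorithm is max{1+γ, βℓ+γ}-approximate. -/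
theorem stmt11 {s q : ℕ} (ℓ : ℕ) (E : Finset (Fin s × Fin q)) (w : Fin s × Fin q → ℝ)
    (hw : ∀ e ∈ E, 0 < w e) (γ βℓ : ℝ) (hγ : 0 ≤ γ) (hβ : 0 ≤ βℓ)
    (hordC : StrongCOrder E w γ) (hordP : WeakPOrder E w ℓ βℓ)
    (M' : Finset (Fin s × Fin q)) (hM' : CGreedyLocalL E w ℓ M')
    (M : Finset (Fin s × Fin q)) (hM : IsBipMatching E M) :
    ∑ e ∈ M, w e ≤ max (1 + γ) (βℓ + γ) * ∑ e ∈ M', w e := by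
  have hw₀ : ∀ e ∈ E, 0 ≤ w e := fun e he => (hw e he).le
  have hM'₀ : ∀ e ∈ M', 0 ≤ w e := fun e he => hw₀ e (hM'.1.1 he)
  have havail : ∑ e ∈ M with e.1 ∈ availSetC E M' e.2, w e ≤ max 1 βℓ * ∑ e ∈ M', w e := by
    refine sum_le_mul_sum_of_charge Prod.snd (hM.injOn_snd.mono (filter_subset _ _))
      (le_max_of_le_left zero_le_one) hM'₀ ?_
    rintro ⟨p, j⟩ he
    obtain ⟨p', hp'M, hle⟩ :=
      hM'.exists_le_max_mul_of_mem_availSetC hw₀ hβ hordP (mem_filter.mp he).2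
    exact ⟨(p', j), hp'M, rfl, hle⟩
  have hblocked : ∑ e ∈ M with e.1 ∉ availSetC E M' e.2, w e ≤ γ * ∑ e ∈ M', w e := by
    refine sum_le_mul_sum_of_charge Prod.fst (hM.injOn_fst.mono (filter_subset _ _)) hγ hM'₀ ?_
    rintro ⟨p, j⟩ he
    rw [mem_filter] at he
    obtain ⟨i, hiM, hle⟩ :=
      hordC.exists_le_mul_of_not_mem_availSetC hM'.1.1 (hM.1 he.1) he.2
    exact ⟨(p, i), hiM, rfl, hle⟩
  calc ∑ e ∈ M, w e
      = ∑ e ∈ M with e.1 ∈ availSetC E M' e.2, w e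
        + ∑ e ∈ M with e.1 ∉ availSetC E M' e.2, w e := (sum_filter_add_sum_filter_not _ _ _).symm
    _ ≤ max 1 βℓ * ∑ e ∈ M', w e + γ * ∑ e ∈ M', w e := add_le_add havail hblocked
    _ = max (1 + γ) (βℓ + γ) * ∑ e ∈ M', w e := by rw [max_add_add_right]; ring
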